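/- Let f be a real polynomial of degree n with nonzero leading coefficient and discriminant sequence [D_1(f),…,D_n(f)]. If f has at most n − j distinct roots in ℂ (for some 0 ≤ j ≤ n), then the last j members of the discriminant sequence vanish: D_{n−j+1}(f) = ⋯ = D_n(f) = 0. -/

import Mathlib

open Polynomial

/-- Entry `(r, c)` (0-indexed) of the discrimination matrix of a real polynomial `f`
regarded as having degree `n`.  Even rows `2*i` carry the coefficient vector
`(a₀, a₁, …, aₙ)` of `f` (where `aₘ = f.coeff (n - m)`) shifted `i` columns to the
right; odd rows `2*i+1` carry the coefficient vector `(n·a₀, (n-1)·a₁, …, a_{n-1})`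
of the derivative `f'` preceded by one zero and shifted `i` columns to the right. -/
def discEntry (n : ℕ) (f : Polynomial ℝ) (r c : ℕ) : ℝ :=
  if r % 2 = 0 then
    if r / 2 ≤ c ∧ c ≤ r / 2 + n then f.coeff (n - (c - r / 2)) else 0
  else
    if r / 2 + 1 ≤ c ∧ c ≤ r / 2 + n then
      ((n - (c - (r / 2 + 1)) : ℕ) : ℝ) * f.coeff (n - (c - (r / 2 + 1)))
    else 0

/-- The `k`-th discriminant `D_k(f)`: the determinant of the submatrix of the
discrimination matrix formed by its first `2k` rows and first `2k` columns. -/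
def discSeq (n : ℕ) (f : Polynomial ℝ) (k : ℕ) : ℝ :=
  Matrix.det (Matrix.of fun i j : Fin (2 * k) => discEntry n f i j)

/-!
If `f` has at most `m` distinct complex roots, its radical `r` has degree at most `m`, and
`f / r` divides `f'`. Writing `f' = (f / r) * u` gives `u * f = r * f'` with `deg u ≤ deg r`.
For `k > m` this relation is a nonzero left kernel vector of the first `2k` rows and columns of
the discrimination matrix: rows `2i` and `2i + 1` list the top coefficients of `X^(k-1-i) f` and
`X^(k-1-i) f'`, so combining them with the coefficients of `u` and `-r` lists the top
coefficients of `u * f - r * f' = 0`.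
-/

open UniqueFactorizationMonoid EuclideanDomain Finset

section Radical

variable {K : Type*} [Field K] [DecidableEq K]

theorem natDegree_radical_le_card_roots_map [PerfectField K] {L : Type*} [Field L]
    [IsAlgClosed L] [DecidableEq L] (ι : K →+* L) (f : K[X]) :
    (radical f).natDegree ≤ (f.map ι).roots.toFinset.card := by
  rcases eq_or_ne f 0 with rfl | hf
  · simp
  have hsep : (radical f).Separable :=
    PerfectField.separable_iff_squarefree.mpr squarefree_radical
  calc (radical f).natDegree = ((radical f).map ι).roots.toFinset.card := by
        rw [Multiset.toFinset_card_of_nodup (nodup_roots hsep.map),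
          IsAlgClosed.card_roots_map_eq_natDegree_of_injective _ ι.injective]
    _ ≤ (f.map ι).roots.toFinset.card :=
        card_le_card <| Multiset.toFinset_subset.mpr <| Multiset.subset_of_le <|
          roots.le_of_dvd (Polynomial.map_ne_zero hf) (Polynomial.map_dvd ι radical_dvd_self)

theorem exists_mul_eq_radical_mul_derivative (f : K[X]) :
    ∃ u : K[X], u.natDegree ≤ (radical f).natDegree ∧ u * f = radical f * derivative f := by
  rcases eq_or_ne f 0 with rfl | hf
  · exact ⟨0, by simp, by simp⟩
  obtain ⟨u, hu⟩ := divRadical_dvd_derivative f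
  refine ⟨u, ?_, ?_⟩
  · rcases eq_or_ne u 0 with rfl | hu0
    · simp
    have hderiv := natDegree_mul (divRadical_ne_zero hf) hu0
    have hfactor := natDegree_mul (radical_ne_zero (a := f)) (divRadical_ne_zero hf)
    rw [← hu] at hderiv
    rw [radical_mul_divRadical] at hfactor
    have := (natDegree_derivative_le f).trans (Nat.sub_le _ 1)
    omega
  · calc u * f = u * (radical f * divRadical f) := by rw [radical_mul_divRadical]
      _ = radical f * derivative f := by rw [hu]; ring

end Radical

theorem sum_range_two_mul {M : Type*} [AddCommMonoid M] (k : ℕ) (g : ℕ → M) :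
    ∑ r ∈ range (2 * k), g r = ∑ i ∈ range k, (g (2 * i) + g (2 * i + 1)) := by
  induction k with
  | zero => simp
  | succ k ih => rw [Nat.mul_succ, sum_range_succ, sum_range_succ, sum_range_succ, ih, add_assoc]

section Interleaving

variable {R : Type*} [Semiring R]

theorem sum_range_coeff_mul_coeff_X_pow_mul {N : ℕ} {p : R[X]} (hp : p.natDegree ≤ N)
    (g : R[X]) (t : ℕ) :
    ∑ i ∈ range (N + 1), p.coeff (N - i) * (X ^ (N - i) * g).coeff t = (p * g).coeff t := by
  have hreflect := sum_range_reflect (fun s => p.coeff s * (X ^ s * g).coeff t) (N + 1)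
  rw [Nat.add_sub_cancel] at hreflect
  rw [hreflect]
  conv_rhs => rw [p.as_sum_range' (N + 1) (Nat.lt_succ_of_le hp)]
  rw [sum_mul, finsetSum_coeff]
  refine sum_congr rfl fun i _ => ?_
  rw [← C_mul_X_pow_eq_monomial, mul_assoc, coeff_C_mul]

def interleavedCoeffs (N : ℕ) (p q : R[X]) (r : ℕ) : R :=
  if r % 2 = 0 then p.coeff (N - r / 2) else q.coeff (N - r / 2)

theorem eq_zero_of_interleavedCoeffs_eq_zero {N : ℕ} {p q : R[X]} (hp : p.natDegree ≤ N)
    (hq : q.natDegree ≤ N) (h : ∀ r < 2 * (N + 1), interleavedCoeffs N p q r = 0) :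
    p = 0 ∧ q = 0 := by
  constructor <;> ext j <;> rw [coeff_zero] <;> rcases le_or_gt j N with hj | hj
  · simpa [interleavedCoeffs, Nat.sub_sub_self hj] using h (2 * (N - j)) (by omega)
  · exact coeff_eq_zero_of_natDegree_lt (hp.trans_lt hj)
  · have := h (2 * (N - j) + 1) (by omega)
    rwa [interleavedCoeffs, if_neg (by omega), show (2 * (N - j) + 1) / 2 = N - j by omega,
      Nat.sub_sub_self hj] at this
  · exact coeff_eq_zero_of_natDegree_lt (hq.trans_lt hj)

end Interleaving

section DiscriminationMatrix

variable {n : ℕ} {f : ℝ[X]}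

theorem discEntry_two_mul (hf : f.natDegree ≤ n) {N i c : ℕ} (hi : i ≤ N) (hc : c ≤ N + n) :
    discEntry n f (2 * i) c = (X ^ (N - i) * f).coeff (N + n - c) := by
  rw [mul_comm (X ^ _), coeff_mul_X_pow', discEntry, if_pos (by omega),
    show 2 * i / 2 = i by omega]
  by_cases hic : i ≤ c ∧ c ≤ i + n
  · rw [if_pos hic, if_pos (by omega), show N + n - c - (N - i) = n - (c - i) by omega]
  · rw [if_neg hic]
    split_ifs
    · exact (coeff_eq_zero_of_natDegree_lt (by omega)).symm
    · rfl

theorem discEntry_two_mul_add_one (hf : f.natDegree ≤ n) {N i c : ℕ} (hi : i ≤ N)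
    (hc : c ≤ N + n) :
    discEntry n f (2 * i + 1) c = (X ^ (N - i) * derivative f).coeff (N + n - c) := by
  rw [mul_comm (X ^ _), coeff_mul_X_pow', discEntry, if_neg (by omega),
    show (2 * i + 1) / 2 = i by omega]
  by_cases hic : i + 1 ≤ c ∧ c ≤ i + n
  · rw [if_pos hic, if_pos (by omega), coeff_derivative, ← Nat.cast_add_one,
      show N + n - c - (N - i) + 1 = n - (c - (i + 1)) by omega, mul_comm]
  · rw [if_neg hic]
    split_ifs
    · rw [coeff_derivative, coeff_eq_zero_of_natDegree_lt (by omega), zero_mul]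
    · rfl

theorem sum_interleavedCoeffs_mul_discEntry (hf : f.natDegree ≤ n) {N : ℕ} {p q : ℝ[X]}
    (hp : p.natDegree ≤ N) (hq : q.natDegree ≤ N) {c : ℕ} (hc : c ≤ N + n) :
    ∑ r ∈ range (2 * (N + 1)), interleavedCoeffs N p q r * discEntry n f r c
      = (p * f + q * derivative f).coeff (N + n - c) := by
  rw [sum_range_two_mul, sum_add_distrib, coeff_add, ← sum_range_coeff_mul_coeff_X_pow_mul hp,
    ← sum_range_coeff_mul_coeff_X_pow_mul hq]
  congr 1 <;> refine sum_congr rfl fun i hi => ?_ <;>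
    have hiN := Nat.le_of_lt_succ (mem_range.1 hi)
  · rw [discEntry_two_mul hf hiN hc, interleavedCoeffs, if_pos (by omega),
      show 2 * i / 2 = i by omega]
  · rw [discEntry_two_mul_add_one hf hiN hc, interleavedCoeffs, if_neg (by omega),
      show (2 * i + 1) / 2 = i by omega]

theorem discSeq_eq_zero_of_mul_add_mul_derivative_eq_zero (hf : f.natDegree ≤ n) {k : ℕ}
    (hk : k ≤ n) {p q : ℝ[X]} (hp : p.natDegree < k) (hq : q.natDegree < k)
    (hpq : p ≠ 0 ∨ q ≠ 0) (h : p * f + q * derivative f = 0) : discSeq n f k = 0 := by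
  obtain ⟨N, rfl⟩ := Nat.exists_eq_add_one_of_ne_zero (by omega : k ≠ 0)
  refine Matrix.exists_vecMul_eq_zero_iff.mp ⟨fun r => interleavedCoeffs N p q r, ?_, ?_⟩
  · intro hw
    have := eq_zero_of_interleavedCoeffs_eq_zero (Nat.le_of_lt_succ hp) (Nat.le_of_lt_succ hq)
      fun r hr => congrFun hw ⟨r, hr⟩
    tauto
  · funext c
    simp only [Matrix.vecMul, dotProduct, Matrix.of_apply, Pi.zero_apply]
    rw [Fin.sum_univ_eq_sum_range (fun r => interleavedCoeffs N p q r * discEntry n f r c),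
      sum_interleavedCoeffs_mul_discEntry hf (Nat.le_of_lt_succ hp) (Nat.le_of_lt_succ hq)
        (by omega), h, coeff_zero]

end DiscriminationMatrix

theorem statement2_general (n j : ℕ) (f : Polynomial ℝ)
    (hdeg : f.natDegree = n)
    (h : (f.map (algebraMap ℝ ℂ)).roots.toFinset.card ≤ n - j) :
    ∀ k, n - j < k → k ≤ n → discSeq n f k = 0 := by
  intro k hjk hkn
  obtain ⟨u, hu, huf⟩ := exists_mul_eq_radical_mul_derivative f
  have hrad : (radical f).natDegree < k :=
    (natDegree_radical_le_card_roots_map (algebraMap ℝ ℂ) f).trans_lt (h.trans_lt hjk)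
  refine discSeq_eq_zero_of_mul_add_mul_derivative_eq_zero hdeg.le hkn (hu.trans_lt hrad)
    ((natDegree_neg _).trans_lt hrad) (Or.inr (neg_ne_zero.mpr radical_ne_zero)) ?_
  rw [neg_mul, huf, add_neg_cancel]

/-- Let `f` be a real polynomial of degree `n` with nonzero leading
coefficient and discriminant sequence `[D₁(f), …, Dₙ(f)]`.  If `f` has at most
`n - j` distinct roots in `ℂ` (for some `0 ≤ j ≤ n`), then the last `j` members of
the discriminant sequence vanish: `D_{n-j+1}(f) = ⋯ = Dₙ(f) = 0`. -/
theorem statement2 (n j : ℕ) (hj : j ≤ n) (f : Polynomial ℝ) (hf : f ≠ 0)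
    (hdeg : f.natDegree = n)
    (h : (f.map (algebraMap ℝ ℂ)).roots.toFinset.card ≤ n - j) :
    ∀ k, n - j < k → k ≤ n → discSeq n f k = 0 :=
  statement2_general n j f hdeg h
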